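/- Let R be a spherical Reuleaux triangle on S²: the intersection of three spherical disks of radius Δ ∈ (0, π/2) whose centers a, b, c are pairwise at spherical distance Δ. Then the circumradius of R equals arcsin((2√3/3) · sin(Δ/2)). -/

import Mathlib

open scoped RealInnerProductSpace

/-- Spherical distance between unit vectors of `E³`. -/
noncomputable def sdist (p q : EuclideanSpace ℝ (Fin 3)) : ℝ := Real.arccos ⟪p, q⟫

/-!
Put `k = cos Δ`, so that `⟪a, b⟫ = ⟪b, c⟫ = ⟪a, c⟫ = k` and `‖a + b + c‖² = 3 (1 + 2k)`; the
circumcentre is `o = (a + b + c) / ‖a + b + c‖`. Any unit `w` has `⟪w, u⟫ ≤ ‖a + b + c‖ / 3` for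
one of the vertices `u ∈ R`, so no disk of radius `< arccos (‖a + b + c‖ / 3)` contains `R`.
Conversely, for `p ∈ R` the numbers `⟪a, p⟫, ⟪b, p⟫, ⟪c, p⟫` are `≥ k`, and since the Gram
determinant of `a, b, c, p` vanishes in `ℝ³` they satisfy a quadratic relation; together these
force their sum to be `≥ 1 + 2k`, i.e. `⟪o, p⟫ ≥ ‖a + b + c‖ / 3`. Finally
`arccos (√(3 (1 + 2 cos Δ)) / 3) = arcsin (2√3/3 · sin (Δ/2))`.
-/

open Matrix Module Real

theorem det_equilateral_bordered {R : Type*} [CommRing R] (k x y z : R) :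
    !![1, k, k, x; k, 1, k, y; k, k, 1, z; x, y, z, 1].det =
      (1 - k) * ((1 - k) * (1 + 2 * k) + k * (x + y + z) ^ 2
        - (1 + 2 * k) * (x ^ 2 + y ^ 2 + z ^ 2)) := by
  simp [det_succ_row_zero, Fin.sum_univ_succ, Fin.succAbove]
  ring

theorem one_add_two_mul_le_add_add_of_quadratic {k x y z : ℝ} (hk₀ : -1 / 3 < k) (hk₁ : k < 1)
    (hx : k ≤ x) (hy : k ≤ y) (hz : k ≤ z)
    (h : (1 - k) * (1 + 2 * k) + k * (x + y + z) ^ 2 - (1 + 2 * k) * (x ^ 2 + y ^ 2 + z ^ 2) = 0) :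
    1 + 2 * k ≤ x + y + z := by
  have hfactor :
      (x + y + z - (1 + 2 * k)) * ((1 + k) * (x + y + z) - (3 * k - 1) * (2 * k + 1)) =
        2 * (1 + 2 * k) * ((x - k) * (y - k) + (y - k) * (z - k) + (x - k) * (z - k)) := by
    linear_combination -h
  have hx' := sub_nonneg.2 hx
  have hy' := sub_nonneg.2 hy
  have hz' := sub_nonneg.2 hz
  have hprod :
      0 ≤ (x + y + z - (1 + 2 * k)) * ((1 + k) * (x + y + z) - (3 * k - 1) * (2 * k + 1)) :=
    hfactor ▸ mul_nonneg (by linarith) (by positivity)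
  -- at `x = y = z = k` the second factor is `(1 - k) (1 + 3k) > 0`, and it increases from there
  have hpos : 0 < (1 + k) * (x + y + z) - (3 * k - 1) * (2 * k + 1) := by nlinarith
  linarith [nonneg_of_mul_nonneg_left hprod hpos]

section

variable {E : Type*} [NormedAddCommGroup E] [InnerProductSpace ℝ E]

theorem det_gram_eq_zero_of_finrank_lt [FiniteDimensional ℝ E] {ι : Type*} [Fintype ι]
    [DecidableEq ι] {v : ι → E} (h : finrank ℝ E < Fintype.card ι) : (gram ℝ v).det = 0 := by
  by_contra hv
  exact (det_gram_ne_zero_iff_linearIndependent.1 hv).fintype_card_le_finrank.not_gt h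

variable {a b c p : E} {k : ℝ}

theorem gram_equilateral_cons (ha : ‖a‖ = 1) (hb : ‖b‖ = 1) (hc : ‖c‖ = 1) (hp : ‖p‖ = 1)
    (hab : ⟪a, b⟫ = k) (hbc : ⟪b, c⟫ = k) (hac : ⟪a, c⟫ = k) :
    gram ℝ ![a, b, c, p] = !![1, k, k, ⟪a, p⟫; k, 1, k, ⟪b, p⟫; k, k, 1, ⟪c, p⟫;
      ⟪a, p⟫, ⟪b, p⟫, ⟪c, p⟫, 1] := by
  ext i j
  fin_cases i <;> fin_cases j <;>
    simp [gram, ha, hb, hc, hp, hab, hbc, hac, real_inner_comm a b, real_inner_comm b c,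
      real_inner_comm a c, real_inner_comm a p, real_inner_comm b p, real_inner_comm c p]

theorem inner_add_add_ge_of_finrank_le_three [FiniteDimensional ℝ E] (hE : finrank ℝ E ≤ 3)
    (ha : ‖a‖ = 1) (hb : ‖b‖ = 1) (hc : ‖c‖ = 1) (hp : ‖p‖ = 1)
    (hab : ⟪a, b⟫ = k) (hbc : ⟪b, c⟫ = k) (hac : ⟪a, c⟫ = k) (hk₀ : -1 / 3 < k) (hk₁ : k < 1)
    (hap : k ≤ ⟪a, p⟫) (hbp : k ≤ ⟪b, p⟫) (hcp : k ≤ ⟪c, p⟫) :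
    1 + 2 * k ≤ ⟪a + b + c, p⟫ := by
  have hdet := det_gram_eq_zero_of_finrank_lt (v := ![a, b, c, p]) (by simp; omega)
  rw [gram_equilateral_cons ha hb hc hp hab hbc hac, det_equilateral_bordered,
    mul_eq_zero, sub_eq_zero] at hdet
  rw [inner_add_left, inner_add_left]
  exact one_add_two_mul_le_add_add_of_quadratic hk₀ hk₁ hap hbp hcp
    (hdet.resolve_left hk₁.ne')

theorem norm_add_add_sq (ha : ‖a‖ = 1) (hb : ‖b‖ = 1) (hc : ‖c‖ = 1)
    (hab : ⟪a, b⟫ = k) (hbc : ⟪b, c⟫ = k) (hac : ⟪a, c⟫ = k) :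
    ‖a + b + c‖ ^ 2 = 3 * (1 + 2 * k) := by
  rw [← real_inner_self_eq_norm_sq]
  simp only [inner_add_left, inner_add_right, real_inner_self_eq_norm_sq, ha, hb, hc,
    real_inner_comm a b, real_inner_comm b c, real_inner_comm a c, hab, hbc, hac]
  ring

theorem exists_inner_le_norm_add_add_div_three {w : E} (hw : ‖w‖ = 1) (a b c : E) :
    ∃ u ∈ ({a, b, c} : Set E), ⟪w, u⟫ ≤ ‖a + b + c‖ / 3 := by
  have hsum : ⟪w, a⟫ + ⟪w, b⟫ + ⟪w, c⟫ ≤ ‖a + b + c‖ := by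
    simpa [inner_add_right, hw] using real_inner_le_norm w (a + b + c)
  by_contra! h
  simp only [Set.mem_insert_iff, Set.mem_singleton_iff, forall_eq_or_imp, forall_eq] at h
  linarith [h.1, h.2.1, h.2.2]

end

section SphericalDistance

variable {u v : EuclideanSpace ℝ (Fin 3)}

theorem cos_sdist (hu : ‖u‖ = 1) (hv : ‖v‖ = 1) : cos (sdist u v) = ⟪u, v⟫ := by
  have h := abs_real_inner_le_norm u v
  rw [hu, hv, one_mul] at h
  exact cos_arccos (neg_le_of_abs_le h) (le_of_abs_le h)

theorem sdist_self (hu : ‖u‖ = 1) : sdist u u = 0 := by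
  rw [sdist, real_inner_self_eq_norm_sq, hu, one_pow, arccos_one]

theorem sdist_comm (u v : EuclideanSpace ℝ (Fin 3)) : sdist u v = sdist v u := by
  rw [sdist, sdist, real_inner_comm]

theorem cos_le_inner_of_sdist_le {Δ : ℝ} (hu : ‖u‖ = 1) (hv : ‖v‖ = 1) (hΔ : Δ ≤ π)
    (h : sdist u v ≤ Δ) : cos Δ ≤ ⟪u, v⟫ := by
  rw [← cos_sdist hu hv]
  exact cos_le_cos_of_nonneg_of_le_pi (arccos_nonneg _) hΔ h

end SphericalDistance

theorem arcsin_two_sqrt_three_div_three_mul_sin_half {Δ : ℝ} (h₀ : 0 ≤ Δ) (h₁ : Δ ≤ 2 * π) :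
    arcsin (2 * √3 / 3 * sin (Δ / 2)) = arccos (√(3 * (1 + 2 * cos Δ)) / 3) := by
  have hsin : 0 ≤ sin (Δ / 2) := sin_nonneg_of_nonneg_of_le_pi (by linarith) (by linarith)
  rw [arcsin_eq_arccos (by positivity)]
  congr 1
  have : 1 - (2 * √3 / 3 * sin (Δ / 2)) ^ 2 = 3 * (1 + 2 * cos Δ) / 3 ^ 2 := by
    rw [mul_pow, div_pow, mul_pow, sq_sqrt zero_le_three, sin_sq_eq_half_sub,
      show 2 * (Δ / 2) = Δ by ring]
    ring
  rw [this, sqrt_div' _ (by norm_num), sqrt_sq zero_le_three]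

theorem stmt9 (Δ : ℝ) (hΔ : Δ ∈ Set.Ioo 0 (Real.pi / 2))
    (a b c : EuclideanSpace ℝ (Fin 3))
    (ha : ‖a‖ = 1) (hb : ‖b‖ = 1) (hc : ‖c‖ = 1)
    (hab : sdist a b = Δ) (hbc : sdist b c = Δ) (hac : sdist a c = Δ)
    (R : Set (EuclideanSpace ℝ (Fin 3)))
    (hR : R = {p | ‖p‖ = 1 ∧ sdist a p ≤ Δ ∧ sdist b p ≤ Δ ∧ sdist c p ≤ Δ}) :
    sInf {ρ : ℝ | ∃ o : EuclideanSpace ℝ (Fin 3), ‖o‖ = 1 ∧ ∀ p ∈ R, sdist o p ≤ ρ}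
      = Real.arcsin (2 * Real.sqrt 3 / 3 * Real.sin (Δ / 2)) := by
  obtain ⟨hΔ₀, hΔ₁⟩ := hΔ
  have hk₀ : 0 < cos Δ := cos_pos_of_mem_Ioo ⟨by linarith, hΔ₁⟩
  have hk₁ : cos Δ < 1 := by simpa using cos_lt_cos_of_nonneg_of_le_pi le_rfl (by linarith) hΔ₀
  have hab' : ⟪a, b⟫ = cos Δ := by rw [← hab, cos_sdist ha hb]
  have hbc' : ⟪b, c⟫ = cos Δ := by rw [← hbc, cos_sdist hb hc]
  have hac' : ⟪a, c⟫ = cos Δ := by rw [← hac, cos_sdist ha hc]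
  set N := ‖a + b + c‖
  have hN : N ^ 2 = 3 * (1 + 2 * cos Δ) := norm_add_add_sq ha hb hc hab' hbc' hac'
  have hN₀ : 0 < N := by nlinarith [norm_nonneg (a + b + c)]
  rw [arcsin_two_sqrt_three_div_three_mul_sin_half hΔ₀.le (by linarith), ← hN,
    sqrt_sq hN₀.le]
  subst hR
  refine IsLeast.csInf_eq ⟨⟨N⁻¹ • (a + b + c), ?_, fun p hp => ?_⟩, ?_⟩
  · rw [norm_smul, norm_inv, norm_norm, inv_mul_cancel₀ hN₀.ne']
  · obtain ⟨hp, hap, hbp, hcp⟩ := hp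
    have hsum := inner_add_add_ge_of_finrank_le_three (by simp) ha hb hc hp hab' hbc' hac'
      (by linarith) hk₁ (cos_le_inner_of_sdist_le ha hp (by linarith) hap)
      (cos_le_inner_of_sdist_le hb hp (by linarith) hbp)
      (cos_le_inner_of_sdist_le hc hp (by linarith) hcp)
    refine arccos_le_arccos ?_
    rw [real_inner_smul_left, le_inv_mul_iff₀ hN₀]
    linarith
  · rintro ρ ⟨w, hw, hcov⟩
    obtain ⟨u, hu, hwu⟩ := exists_inner_le_norm_add_add_div_three hw a b c
    refine (arccos_le_arccos hwu).trans (hcov u ?_)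
    rcases hu with rfl | rfl | rfl <;>
      simp_all [sdist_self, sdist_comm, hΔ₀.le]
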